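/- For all integers z₀, …, z₁₅, the group determinant of G = C₂² ⋊ C₄ factors as D_G(z₀, z₁, …, z₁₅) = D_{4×2}(z₀+z₈, z₁+z₉, …, z₇+z₁₅) · F(z₀−z₈, z₁−z₉, …, z₇−z₁₅)². -/

import Mathlib

/-- The group `C₂² ⋊ C₄ = ⟨g₁,g₂,g₃ ∣ g₁² = g₂² = g₃⁴ = e, g₁g₂ = g₂g₁, g₁g₃ = g₃g₁,
g₂g₃ = g₃g₂g₁⟩`; the element `g₁^r g₂^s g₃^t` is represented by `⟨r, s, t⟩`. -/
@[ext] structure GG where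
  r : ZMod 2
  s : ZMod 2
  t : ZMod 4
deriving DecidableEq, Fintype

/-- Reduction `ZMod 4 → ZMod 2`. -/
def pr : ZMod 4 →+* ZMod 2 := ZMod.castHom (show (2:ℕ) ∣ 4 by norm_num) (ZMod 2)

instance : Mul GG := ⟨fun a b => ⟨a.r + b.r + pr a.t * b.s, a.s + b.s, a.t + b.t⟩⟩
instance : One GG := ⟨⟨0, 0, 0⟩⟩
instance : Inv GG := ⟨fun a => ⟨a.r + pr a.t * a.s, -a.s, -a.t⟩⟩

lemma gmul_def (a b : GG) : a * b = ⟨a.r + b.r + pr a.t * b.s, a.s + b.s, a.t + b.t⟩ := rfl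
lemma ginv_def (a : GG) : a⁻¹ = ⟨a.r + pr a.t * a.s, -a.s, -a.t⟩ := rfl
lemma gone_def : (1 : GG) = ⟨0, 0, 0⟩ := rfl

instance : Group GG where
  mul_assoc a b c := by
    simp only [gmul_def, map_add]
    ext <;> simp <;> ring
  one_mul a := by simp [gmul_def, gone_def]
  mul_one a := by simp [gmul_def, gone_def]
  inv_mul_cancel a := by
    simp only [ginv_def, gmul_def, gone_def]
    ext <;> simp
    · ring_nf
      have h2 : (2 : ZMod 2) = 0 := rfl
      rw [h2, mul_zero]
      simp
    · generalize a.s = x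
      revert x
      decide

/-- The index `j = t + 4s + 8r` of the element `g₁^r g₂^s g₃^t`. -/
def gidx (a : GG) : Fin 16 :=
  ⟨a.t.val + 4 * a.s.val + 8 * a.r.val, by
    have h1 := a.t.val_lt
    have h2 := a.s.val_lt
    have h3 := a.r.val_lt
    omega⟩

/-- The group determinant `D_G(z₀, …, z₁₅) = det (z_{g h⁻¹})_{g,h ∈ G}` of `G = C₂² ⋊ C₄`. -/
noncomputable def DG (z : Fin 16 → ℤ) : ℤ :=
  Matrix.det (Matrix.of fun g h : GG => z (gidx (g * h⁻¹)))

/-- The group determinant `D_{4×2}(y₀, …, y₇) = det (y_{g h⁻¹})_{g,h ∈ C₄ × C₂}` of `C₄ × C₂`,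
where the element `(r mod 4, s mod 2)` is indexed by `j = r + 4s`. -/
def D4x2 (y0 y1 y2 y3 y4 y5 y6 y7 : ℤ) : ℤ :=
  Matrix.det (Matrix.of fun g h : Fin 4 × Fin 2 =>
    ![![y0, y1, y2, y3], ![y4, y5, y6, y7]] (g.2 - h.2) (g.1 - h.1))

/-- `f(x, y, z, w) = x² + y² - z² - w²`. -/
def fP (x y z w : ℤ) : ℤ := x ^ 2 + y ^ 2 - z ^ 2 - w ^ 2

/-- `F(w₀,…,w₇) = f(w₀-w₂, w₁-w₃, w₄-w₆, w₅-w₇) ⬝ f(w₅+w₇, w₀+w₂, w₁+w₃, w₄+w₆)`. -/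
def FP (w0 w1 w2 w3 w4 w5 w6 w7 : ℤ) : ℤ :=
  fP (w0 - w2) (w1 - w3) (w4 - w6) (w5 - w7) * fP (w5 + w7) (w0 + w2) (w1 + w3) (w4 + w6)

/-! The element `g₁` is a central involution, so listing `G` as a transversal `R` of `⟨g₁⟩`
followed by `g₁ R` puts the group matrix in the block form `[[A, B], [B, A]]`, whose determinant
is `det (A + B) * det (A - B)`. Here `A + B` is the group matrix of `G / ⟨g₁⟩ ≅ C₄ × C₂` at
`z_j + z_{j+8}`. Splitting `A - B` in the same way along the central involution `g₃²` leaves two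
`4 × 4` determinants of matrices of right multiplication by split quaternions, i.e. the squares
of the two norm forms whose product is `F`. -/

open Matrix

theorem Matrix.det_fromBlocks_self_self {R n : Type*} [CommRing R] [Fintype n] [DecidableEq n]
    (A B : Matrix n n R) : (fromBlocks A B B A).det = (A + B).det * (A - B).det := by
  have hfactor : fromBlocks A B B A =
      fromBlocks 1 1 0 1 * fromBlocks (A - B) 0 B (A + B) * fromBlocks 1 (-1) 0 1 := by
    simp only [fromBlocks_multiply, fromBlocks_inj]
    refine ⟨?_, ?_, ?_, ?_⟩ <;> simp
  rw [hfactor, det_mul, det_mul, det_fromBlocks_zero₂₁, det_fromBlocks_zero₂₁, det_fromBlocks_zero₁₂,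
    det_one]
  ring

/-- Right multiplication by `a + b i + c j + d ij` in the quaternion algebra with `i² = s₁`,
`j² = s₂`, `ij = -ji`; the determinant is the square of the reduced norm. -/
theorem det_quaternion_rightMul {R : Type*} [CommRing R] (s₁ s₂ a b c d : R) :
    !![a, s₁ * b, s₂ * c, -(s₁ * s₂ * d);
       b, a, -(s₂ * d), s₂ * c;
       c, s₁ * d, a, -(s₁ * b);
       d, c, -b, a].det = (a ^ 2 - s₁ * b ^ 2 - s₂ * c ^ 2 + s₁ * s₂ * d ^ 2) ^ 2 := by
  simp [det_succ_row_zero, Fin.sum_univ_succ, Fin.succAbove]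
  ring

def mulInvMatrix {R G κ : Type*} [Group G] (w : G → R) (x : κ → G) : Matrix κ κ R :=
  of fun a b => w (x a * (x b)⁻¹)

theorem det_mulInvMatrix_of_mem_center {R G ι κ : Type*} [CommRing R] [Group G] [Fintype ι]
    [DecidableEq ι] [Fintype κ] [DecidableEq κ] (w : G → R) {c : G}
    (hc : c ∈ Subgroup.center G) (hc2 : c ^ 2 = 1) (x : κ → G) (e : ι ⊕ ι ≃ κ) (y : ι → G)
    (hl : ∀ i, x (e (.inl i)) = y i) (hr : ∀ i, x (e (.inr i)) = c * y i) :
    (mulInvMatrix w x).det =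
      (mulInvMatrix (fun g => w g + w (c * g)) y).det *
        (mulInvMatrix (fun g => w g - w (c * g)) y).det := by
  have hcomm : ∀ g, g * c = c * g := Subgroup.mem_center_iff.mp hc
  have hinv : c⁻¹ = c := inv_eq_of_mul_eq_one_right (by rw [← pow_two, hc2])
  have hblocks : (mulInvMatrix w x).submatrix e e =
      fromBlocks (mulInvMatrix w y) (mulInvMatrix (fun g => w (c * g)) y)
        (mulInvMatrix (fun g => w (c * g)) y) (mulInvMatrix w y) := by
    ext (i | i) (j | j) <;> simp only [mulInvMatrix, submatrix_apply, of_apply,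
      fromBlocks_apply₁₁, fromBlocks_apply₁₂, fromBlocks_apply₂₁, fromBlocks_apply₂₂, hl, hr,
      _root_.mul_inv_rev, hinv, mul_assoc]
    · rw [← mul_assoc, hcomm]
    · rw [← mul_assoc (y i), hcomm, ← mul_assoc, ← pow_two, hc2, one_mul]
  rw [← det_submatrix_equiv_self e, hblocks, det_fromBlocks_self_self]
  rfl

namespace GG

def g₁ : GG := ⟨1, 0, 0⟩

def g₃ : GG := ⟨0, 0, 1⟩

/-- `rep (t, s) = g₂ ^ s g₃ ^ t`, so `gidx (rep (t, s)) = t + 4 s`. -/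
def rep (p : Fin 4 × Fin 2) : GG := ⟨0, (p.2 : ℕ), (p.1 : ℕ)⟩

def rep₄ : Fin 4 → GG := ![⟨0, 0, 0⟩, ⟨0, 0, 1⟩, ⟨0, 1, 0⟩, ⟨0, 1, 1⟩]

theorem g₁_mem_center : g₁ ∈ Subgroup.center GG := Subgroup.mem_center_iff.mpr (by decide)

theorem g₁_sq : g₁ ^ 2 = 1 := by decide

theorem g₃_sq_mem_center : g₃ ^ 2 ∈ Subgroup.center GG := Subgroup.mem_center_iff.mpr (by decide)

theorem g₃_sq_sq : (g₃ ^ 2) ^ 2 = 1 := by decide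

noncomputable def sumEquiv : (Fin 4 × Fin 2) ⊕ (Fin 4 × Fin 2) ≃ GG :=
  Equiv.ofBijective (Sum.elim rep (g₁ * rep ·)) (by decide)

noncomputable def sumEquiv₄ : Fin 4 ⊕ Fin 4 ≃ Fin 4 × Fin 2 :=
  Equiv.ofBijective (Sum.elim ![(0, 0), (1, 0), (0, 1), (1, 1)] ![(2, 0), (3, 0), (2, 1), (3, 1)])
    (by decide)

theorem rep_sumEquiv₄_inl : ∀ k, rep (sumEquiv₄ (.inl k)) = rep₄ k := by decide

theorem rep_sumEquiv₄_inr : ∀ k, rep (sumEquiv₄ (.inr k)) = g₃ ^ 2 * rep₄ k := by decide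

theorem det_mulInvMatrix_rep_add (z : Fin 16 → ℤ) :
    (mulInvMatrix (fun g => z (gidx g) + z (gidx (g₁ * g))) rep).det =
      D4x2 (z 0 + z 8) (z 1 + z 9) (z 2 + z 10) (z 3 + z 11)
        (z 4 + z 12) (z 5 + z 13) (z 6 + z 14) (z 7 + z 15) := by
  unfold D4x2
  congr 1
  ext ⟨t, s⟩ ⟨t', s'⟩
  fin_cases t <;> fin_cases s <;> fin_cases t' <;> fin_cases s' <;>
    first | rfl | exact add_comm _ _

theorem det_mulInvMatrix_rep₄_add (z : Fin 16 → ℤ) :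
    (mulInvMatrix (fun g => z (gidx g) - z (gidx (g₁ * g)) +
      (z (gidx (g₃ ^ 2 * g)) - z (gidx (g₁ * (g₃ ^ 2 * g))))) rep₄).det =
      fP (z 5 - z 13 + (z 7 - z 15)) (z 0 - z 8 + (z 2 - z 10)) (z 1 - z 9 + (z 3 - z 11))
        (z 4 - z 12 + (z 6 - z 14)) ^ 2 := by
  have hm : mulInvMatrix (fun g => z (gidx g) - z (gidx (g₁ * g)) +
      (z (gidx (g₃ ^ 2 * g)) - z (gidx (g₁ * (g₃ ^ 2 * g))))) rep₄ =
      !![z 0 - z 8 + (z 2 - z 10), z 3 - z 11 + (z 1 - z 9), z 4 - z 12 + (z 6 - z 14),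
          z 15 - z 7 + (z 13 - z 5);
        z 1 - z 9 + (z 3 - z 11), z 0 - z 8 + (z 2 - z 10), z 13 - z 5 + (z 15 - z 7),
          z 4 - z 12 + (z 6 - z 14);
        z 4 - z 12 + (z 6 - z 14), z 7 - z 15 + (z 5 - z 13), z 0 - z 8 + (z 2 - z 10),
          z 11 - z 3 + (z 9 - z 1);
        z 5 - z 13 + (z 7 - z 15), z 4 - z 12 + (z 6 - z 14), z 9 - z 1 + (z 11 - z 3),
          z 0 - z 8 + (z 2 - z 10)] := by
    ext i j
    fin_cases i <;> fin_cases j <;> rfl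
  rw [hm]
  convert det_quaternion_rightMul 1 1 (z 0 - z 8 + (z 2 - z 10)) (z 1 - z 9 + (z 3 - z 11))
    (z 4 - z 12 + (z 6 - z 14)) (z 5 - z 13 + (z 7 - z 15)) using 2
  · ext i j
    fin_cases i <;> fin_cases j <;> simp <;> ring
  · rw [fP]
    ring

theorem det_mulInvMatrix_rep₄_sub (z : Fin 16 → ℤ) :
    (mulInvMatrix (fun g => z (gidx g) - z (gidx (g₁ * g)) -
      (z (gidx (g₃ ^ 2 * g)) - z (gidx (g₁ * (g₃ ^ 2 * g))))) rep₄).det =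
      fP (z 0 - z 8 - (z 2 - z 10)) (z 1 - z 9 - (z 3 - z 11)) (z 4 - z 12 - (z 6 - z 14))
        (z 5 - z 13 - (z 7 - z 15)) ^ 2 := by
  have hm : mulInvMatrix (fun g => z (gidx g) - z (gidx (g₁ * g)) -
      (z (gidx (g₃ ^ 2 * g)) - z (gidx (g₁ * (g₃ ^ 2 * g))))) rep₄ =
      !![z 0 - z 8 - (z 2 - z 10), z 3 - z 11 - (z 1 - z 9), z 4 - z 12 - (z 6 - z 14),
          z 15 - z 7 - (z 13 - z 5);
        z 1 - z 9 - (z 3 - z 11), z 0 - z 8 - (z 2 - z 10), z 13 - z 5 - (z 15 - z 7),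
          z 4 - z 12 - (z 6 - z 14);
        z 4 - z 12 - (z 6 - z 14), z 7 - z 15 - (z 5 - z 13), z 0 - z 8 - (z 2 - z 10),
          z 11 - z 3 - (z 9 - z 1);
        z 5 - z 13 - (z 7 - z 15), z 4 - z 12 - (z 6 - z 14), z 9 - z 1 - (z 11 - z 3),
          z 0 - z 8 - (z 2 - z 10)] := by
    ext i j
    fin_cases i <;> fin_cases j <;> rfl
  rw [hm]
  convert det_quaternion_rightMul (-1) 1 (z 0 - z 8 - (z 2 - z 10)) (z 1 - z 9 - (z 3 - z 11))
    (z 4 - z 12 - (z 6 - z 14)) (z 5 - z 13 - (z 7 - z 15)) using 2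
  · ext i j
    fin_cases i <;> fin_cases j <;> simp <;> ring
  · rw [fP]
    ring

theorem DG_eq_D4x2_mul_FP_sq (z : Fin 16 → ℤ) :
    DG z = D4x2 (z 0 + z 8) (z 1 + z 9) (z 2 + z 10) (z 3 + z 11)
        (z 4 + z 12) (z 5 + z 13) (z 6 + z 14) (z 7 + z 15) *
      FP (z 0 - z 8) (z 1 - z 9) (z 2 - z 10) (z 3 - z 11)
        (z 4 - z 12) (z 5 - z 13) (z 6 - z 14) (z 7 - z 15) ^ 2 := by
  have hG := det_mulInvMatrix_of_mem_center (fun g => z (gidx g)) g₁_mem_center g₁_sq id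
    sumEquiv rep (fun _ => rfl) (fun _ => rfl)
  have hQ := det_mulInvMatrix_of_mem_center (fun g => z (gidx g) - z (gidx (g₁ * g)))
    g₃_sq_mem_center g₃_sq_sq rep sumEquiv₄ rep₄ rep_sumEquiv₄_inl rep_sumEquiv₄_inr
  rw [show DG z = _ from hG, hQ, det_mulInvMatrix_rep_add, det_mulInvMatrix_rep₄_add,
    det_mulInvMatrix_rep₄_sub, FP]
  ring

end GG

theorem DG_factorization (z0 z1 z2 z3 z4 z5 z6 z7 z8 z9 z10 z11 z12 z13 z14 z15 : ℤ) :
    DG ![z0, z1, z2, z3, z4, z5, z6, z7, z8, z9, z10, z11, z12, z13, z14, z15] =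
      D4x2 (z0 + z8) (z1 + z9) (z2 + z10) (z3 + z11)
          (z4 + z12) (z5 + z13) (z6 + z14) (z7 + z15) *
        FP (z0 - z8) (z1 - z9) (z2 - z10) (z3 - z11)
          (z4 - z12) (z5 - z13) (z6 - z14) (z7 - z15) ^ 2 :=
  GG.DG_eq_D4x2_mul_FP_sq _
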